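/- arXiv:2004.15024 — 5 statements merged into one kernel-verified Lean document; each statement's English description precedes it below -/
import Mathlib

section
/- Let n, k be positive integers, K = C((t)), and γ ∈ GL_n(K) the companion matrix of x^n - t^k (top-right entry t^k, subdiagonal entries 1, all else 0). If (g, μ, λ) ∈ GL_n(C[[t]]-valued loop group extension) × C^× × C^× satisfies g(γ·μ)g^{-1}(λ·t) = γ(t) in the appropriate sense and g·e_1 = e_1, then μ^n λ^k = 1 and g = diag(1, μ^{-1}, μ^{-2}, ..., μ^{1-n}). Consequently the stabilizer of the pair (γ, e_1) under this combined adjoint-scaling-rotation action is isomorphic to C^×, given by ν ↦ (diag(1, ν^k, ..., ν^{(n-1)k}), ν^{-k}, ν^n). -/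
open scoped Matrix

noncomputable section

/-- `K = ℂ((t))`, the field of formal Laurent series. -/
abbrev KK : Type := LaurentSeries ℂ

/-- The uniformizer `t`. -/
def tt : KK := (PowerSeries.X : PowerSeries ℂ)

/-- The companion matrix of `x^n - (top-right entry s)`: first row `(0, ..., 0, s)`,
`1`s on the subdiagonal, `0` elsewhere. -/
def gam (n : ℕ) (s : KK) : Matrix (Fin n) (Fin n) KK := fun i j =>
  if (i : ℕ) = 0 ∧ (j : ℕ) = n - 1 then s
  else if (i : ℕ) = (j : ℕ) + 1 then 1 else 0

/-- The first standard basis vector `e_1`. -/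
def e1 (n : ℕ) : Fin n → KK := fun i => if (i : ℕ) = 0 then 1 else 0

/-!
`e1` is a cyclic vector of the companion matrix `γ_s = gam n s`: `γ_s^i e₁ = e_{i+1}` for
`i < n` and `γ_s^n e₁ = s e₁`. If `c • g γ_s g⁻¹ = γ_{s'}` and `g e₁ = e₁`, then
`c^i g (γ_s^i e₁) = γ_{s'}^i e₁` for all `i`: for `i < n` this says `g e_{i+1} = c^{-i} e_{i+1}`, so
`g` is diagonal, and `i = n` gives `c^n s = s'`. Conversely, conjugating `γ_s` by
`diag(1, r, …, r^(n-1))` and scaling by `c = r⁻¹` gives `γ_{c^n s}`.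
-/

open Matrix

lemma e1_eq_single {n : ℕ} (hn : 0 < n) : e1 n = Pi.single ⟨0, hn⟩ 1 := by
  funext i
  simp [e1, Pi.single_apply, Fin.ext_iff]

lemma gam_mulVec_single {n : ℕ} (s : KK) {i : ℕ} (hi : i + 1 < n) :
    gam n s *ᵥ Pi.single ⟨i, by omega⟩ 1 = Pi.single ⟨i + 1, hi⟩ 1 := by
  rw [mulVec_single_one]
  funext j
  simp only [col_apply, gam, Pi.single_apply, Fin.ext_iff]
  split_ifs <;> first | rfl | omega

lemma gam_mulVec_single_last {n : ℕ} (hn : 0 < n) (s : KK) :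
    gam n s *ᵥ Pi.single ⟨n - 1, by omega⟩ 1 = s • e1 n := by
  rw [mulVec_single_one]
  funext j
  simp only [col_apply, gam, e1, Pi.smul_apply, smul_eq_mul]
  split_ifs <;> simp_all; omega

lemma gam_pow_mulVec_e1 {n : ℕ} (s : KK) {i : ℕ} (hi : i < n) :
    gam n s ^ i *ᵥ e1 n = Pi.single ⟨i, hi⟩ 1 := by
  induction i with
  | zero => rw [pow_zero, one_mulVec, e1_eq_single]
  | succ i ih => rw [pow_succ', ← mulVec_mulVec, ih (by omega), gam_mulVec_single]

lemma gam_pow_self_mulVec_e1 {n : ℕ} (hn : 0 < n) (s : KK) :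
    gam n s ^ n *ᵥ e1 n = s • e1 n := by
  obtain ⟨m, rfl⟩ : ∃ m, n = m + 1 := ⟨n - 1, by omega⟩
  rw [pow_succ', ← mulVec_mulVec, gam_pow_mulVec_e1 s (Nat.lt_succ_self m)]
  exact gam_mulVec_single_last hn s

theorem eq_diagonal_of_smul_conj_gam_eq {n : ℕ} (hn : 0 < n) {g : (Matrix (Fin n) (Fin n) KK)ˣ}
    {c s s' : KK} (hc : c ≠ 0)
    (hg : c • ((g : Matrix (Fin n) (Fin n) KK) * gam n s *
      ((g⁻¹ : (Matrix (Fin n) (Fin n) KK)ˣ) : Matrix (Fin n) (Fin n) KK)) = gam n s')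
    (he : (g : Matrix (Fin n) (Fin n) KK) *ᵥ e1 n = e1 n) :
    (g : Matrix (Fin n) (Fin n) KK) = diagonal (fun i : Fin n => (c ^ (i : ℕ))⁻¹) ∧
      c ^ n * s = s' := by
  set G : Matrix (Fin n) (Fin n) KK := ↑g
  have step (w : Fin n → KK) : c • G *ᵥ (gam n s *ᵥ w) = gam n s' *ᵥ (G *ᵥ w) := by
    rw [← hg, smul_mulVec, mulVec_mulVec, mulVec_mulVec, mul_assoc _ _ G, Units.inv_mul, mul_one]
  have orbit (i : ℕ) : c ^ i • G *ᵥ (gam n s ^ i *ᵥ e1 n) = gam n s' ^ i *ᵥ e1 n := by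
    induction i with
    | zero => simp only [pow_zero, one_smul, one_mulVec, he]
    | succ i ih =>
      rw [pow_succ c, ← smul_smul, pow_succ' (gam n s), pow_succ' (gam n s'),
        ← mulVec_mulVec, ← mulVec_mulVec, step, ← mulVec_smul, ih]
  constructor
  · refine ext_of_mulVec_single fun j => ?_
    have hj := orbit j
    rw [gam_pow_mulVec_e1 s j.isLt, gam_pow_mulVec_e1 s' j.isLt, Fin.eta] at hj
    calc G *ᵥ Pi.single j 1 = (c ^ (j : ℕ))⁻¹ • c ^ (j : ℕ) • G *ᵥ Pi.single j 1 :=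
          (inv_smul_smul₀ (pow_ne_zero _ hc) _).symm
      _ = (c ^ (j : ℕ))⁻¹ • Pi.single j 1 := by rw [hj]
      _ = diagonal (fun i : Fin n => (c ^ (i : ℕ))⁻¹) *ᵥ Pi.single j 1 := by
          rw [diagonal_mulVec_single]
          funext i
          simp [Pi.single_apply]
  · have hcorner := congrFun (orbit n) ⟨0, hn⟩
    rw [gam_pow_self_mulVec_e1 hn, gam_pow_self_mulVec_e1 hn, mulVec_smul, he, smul_smul] at hcorner
    simpa [e1] using hcorner

lemma smul_diagonal_pow_mul_gam_mul_diagonal_pow {n : ℕ} {c r : KK} (hcr : c * r = 1) (s : KK) :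
    c • (diagonal (fun i : Fin n => r ^ (i : ℕ)) * gam n s *
      diagonal (fun i : Fin n => c ^ (i : ℕ))) = gam n (c ^ n * s) := by
  refine Matrix.ext fun i j => ?_
  simp only [Matrix.smul_apply, mul_diagonal, diagonal_mul, gam, smul_eq_mul]
  split_ifs with hcorner hsub
  · obtain ⟨hi, hj⟩ := hcorner
    have hn : n = (n - 1) + 1 := by omega
    rw [hi, hj, pow_zero, one_mul, hn, pow_succ', Nat.add_sub_cancel]
    ring
  · rw [hsub]
    calc c * (r ^ ((j : ℕ) + 1) * 1 * c ^ (j : ℕ)) = (c * r) ^ ((j : ℕ) + 1) := by ring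
      _ = 1 := by rw [hcr, one_pow]
  · simp

theorem stmt4_general (n k : ℕ) (hn : 0 < n) :
    (∀ (μ lam : ℂ), μ ≠ 0 → lam ≠ 0 → ∀ g : (Matrix (Fin n) (Fin n) KK)ˣ,
      (algebraMap ℂ KK μ) •
          ((g : Matrix (Fin n) (Fin n) KK) * gam n ((algebraMap ℂ KK lam * tt) ^ k) *
            ((g⁻¹ : (Matrix (Fin n) (Fin n) KK)ˣ) : Matrix (Fin n) (Fin n) KK)) =
        gam n (tt ^ k) →
      Matrix.mulVec (g : Matrix (Fin n) (Fin n) KK) (e1 n) = e1 n →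
      μ ^ n * lam ^ k = 1 ∧
        (g : Matrix (Fin n) (Fin n) KK) =
          Matrix.diagonal fun i : Fin n => algebraMap ℂ KK ((μ ^ (i : ℕ))⁻¹)) ∧
    (∀ ν : ℂ, ν ≠ 0 →
      (algebraMap ℂ KK ((ν ^ k)⁻¹)) •
          ((Matrix.diagonal fun i : Fin n => algebraMap ℂ KK (ν ^ ((i : ℕ) * k))) *
            gam n ((algebraMap ℂ KK (ν ^ n) * tt) ^ k) *
            (Matrix.diagonal fun i : Fin n => algebraMap ℂ KK ((ν ^ ((i : ℕ) * k))⁻¹))) =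
        gam n (tt ^ k) ∧
      Matrix.mulVec (Matrix.diagonal fun i : Fin n => algebraMap ℂ KK (ν ^ ((i : ℕ) * k)))
        (e1 n) = e1 n) := by
  constructor
  · intro μ lam hμ _ g hg he
    obtain ⟨hdiag, hcorner⟩ := eq_diagonal_of_smul_conj_gam_eq hn (by simpa using hμ) hg he
    refine ⟨?_, by simpa using hdiag⟩
    apply (algebraMap ℂ KK).injective
    apply mul_right_cancel₀ (pow_ne_zero k (by simp [tt] : tt ≠ 0))
    simpa [mul_pow, mul_assoc] using hcorner
  · intro ν hν
    have hcr : algebraMap ℂ KK (ν ^ k)⁻¹ * algebraMap ℂ KK (ν ^ k) = 1 := by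
      rw [← map_mul, inv_mul_cancel₀ (pow_ne_zero k hν), map_one]
    constructor
    · have hpow (i : ℕ) : algebraMap ℂ KK (ν ^ (i * k)) = algebraMap ℂ KK (ν ^ k) ^ i := by
        rw [← map_pow, ← pow_mul, mul_comm]
      have hpow_inv (i : ℕ) :
          algebraMap ℂ KK (ν ^ (i * k))⁻¹ = algebraMap ℂ KK (ν ^ k)⁻¹ ^ i := by
        rw [← map_pow, inv_pow, ← pow_mul, mul_comm]
      simp only [hpow, hpow_inv]
      rw [smul_diagonal_pow_mul_gam_mul_diagonal_pow hcr, mul_pow, ← mul_assoc, ← map_pow,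
        ← map_pow, ← map_mul, inv_pow, ← pow_mul, ← pow_mul, mul_comm k n,
        inv_mul_cancel₀ (pow_ne_zero _ hν), map_one, one_mul]
    · rw [e1_eq_single hn, diagonal_mulVec_single]
      simp

/-- for `γ` the companion matrix of `x^n - t^k`, if
`μ • (g γ(λt) g⁻¹) = γ(t)` and `g e_1 = e_1` then `μ^n λ^k = 1` and
`g = diag(1, μ⁻¹, ..., μ^(1-n))`; consequently the stabilizer of `(γ, e_1)` is the copy of
`ℂ^×` given by `ν ↦ (diag(1, ν^k, ..., ν^((n-1)k)), ν^{-k}, ν^n)`. -/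
theorem stmt4 (n k : ℕ) (hn : 0 < n) (hk : 0 < k) :
    (∀ (μ lam : ℂ), μ ≠ 0 → lam ≠ 0 → ∀ g : (Matrix (Fin n) (Fin n) KK)ˣ,
      (algebraMap ℂ KK μ) •
          ((g : Matrix (Fin n) (Fin n) KK) * gam n ((algebraMap ℂ KK lam * tt) ^ k) *
            ((g⁻¹ : (Matrix (Fin n) (Fin n) KK)ˣ) : Matrix (Fin n) (Fin n) KK)) =
        gam n (tt ^ k) →
      Matrix.mulVec (g : Matrix (Fin n) (Fin n) KK) (e1 n) = e1 n →
      μ ^ n * lam ^ k = 1 ∧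
        (g : Matrix (Fin n) (Fin n) KK) =
          Matrix.diagonal fun i : Fin n => algebraMap ℂ KK ((μ ^ (i : ℕ))⁻¹)) ∧
    (∀ ν : ℂ, ν ≠ 0 →
      (algebraMap ℂ KK ((ν ^ k)⁻¹)) •
          ((Matrix.diagonal fun i : Fin n => algebraMap ℂ KK (ν ^ ((i : ℕ) * k))) *
            gam n ((algebraMap ℂ KK (ν ^ n) * tt) ^ k) *
            (Matrix.diagonal fun i : Fin n => algebraMap ℂ KK ((ν ^ ((i : ℕ) * k))⁻¹))) =
        gam n (tt ^ k) ∧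
      Matrix.mulVec (Matrix.diagonal fun i : Fin n => algebraMap ℂ KK (ν ^ ((i : ℕ) * k)))
        (e1 n) = e1 n) :=
  stmt4_general n k hn
end
end

section
/- With V, E, F, H as in the sl_2 action on basis vectors |A_1,A_2⟩ (0 ≤ A_1 ≤ A_2 ≤ A_1+2ℓ+1), define X|A_1,A_2⟩ = ((A_2-A_1-2ℓ-1)/(A_2-A_1-(2ℓ+1)/2))|A_1,A_2+1⟩ + ((A_2-A_1)/(A_2-A_1-(2ℓ+1)/2))|A_1+1,A_2⟩ and Y|A_1,A_2⟩ = ((A_2-A_1)((2ℓ+1)/2-A_2)ℏ/(A_2-A_1-(2ℓ+1)/2))|A_1,A_2-1⟩ + (A_1(2ℓ+1-A_2+A_1)ℏ/(A_2-A_1-(2ℓ+1)/2))|A_1-1,A_2⟩. Then [X,Y] = 2ℏ on V. -/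
attribute [local instance] Classical.propDecidable

noncomputable section

/-- The coefficient field `ℂ(ℏ)`. -/
abbrev Fh : Type := RatFunc ℂ

/-- The generator `ℏ` of `ℂ(ℏ)`. -/
def hb : Fh := RatFunc.X

/-- Admissibility of the index `(A₁, A₂)`: `0 ≤ A₁ ≤ A₂ ≤ A₁ + 2ℓ + 1`. -/
def Adm (ℓ : ℕ) (A : ℤ × ℤ) : Prop :=
  0 ≤ A.1 ∧ A.1 ≤ A.2 ∧ A.2 ≤ A.1 + (2 * ℓ + 1)

/-- The vector space `V` with basis `|A₁, A₂⟩` indexed by admissible pairs. -/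
abbrev V (ℓ : ℕ) : Type := {A : ℤ × ℤ // Adm ℓ A} →₀ Fh

/-- The basis vector `|A₁, A₂⟩`, with out-of-range indices giving `0`. -/
def ket (ℓ : ℕ) (A : ℤ × ℤ) : V ℓ :=
  if h : Adm ℓ A then Finsupp.single ⟨A, h⟩ 1 else 0

/-- `E |A₁,A₂⟩ = |A₁+1, A₂+1⟩`. -/
def opE (ℓ : ℕ) : V ℓ →ₗ[Fh] V ℓ :=
  Finsupp.lsum Fh fun A =>
    LinearMap.toSpanSingleton Fh (V ℓ) (ket ℓ (A.1.1 + 1, A.1.2 + 1))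

/-- `F |A₁,A₂⟩ = A₁ ((2ℓ+1)/2 - A₂) ℏ² |A₁-1, A₂-1⟩`. -/
def opF (ℓ : ℕ) : V ℓ →ₗ[Fh] V ℓ :=
  Finsupp.lsum Fh fun A =>
    LinearMap.toSpanSingleton Fh (V ℓ)
      (((((A.1.1 : ℚ) * ((2 * ℓ + 1) / 2 - (A.1.2 : ℚ)) : ℚ) : Fh) * hb ^ 2) •
        ket ℓ (A.1.1 - 1, A.1.2 - 1))

/-- `H |A₁,A₂⟩ = (A₁ + A₂ + 1 - (2ℓ+1)/2) ℏ |A₁, A₂⟩`. -/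
def opH (ℓ : ℕ) : V ℓ →ₗ[Fh] V ℓ :=
  Finsupp.lsum Fh fun A =>
    LinearMap.toSpanSingleton Fh (V ℓ)
      (((((A.1.1 : ℚ) + (A.1.2 : ℚ) + 1 - (2 * ℓ + 1) / 2 : ℚ) : Fh) * hb) •
        ket ℓ (A.1.1, A.1.2))

/-- `X |A₁,A₂⟩ = ((A₂-A₁-2ℓ-1)/(A₂-A₁-(2ℓ+1)/2)) |A₁,A₂+1⟩
              + ((A₂-A₁)/(A₂-A₁-(2ℓ+1)/2)) |A₁+1,A₂⟩`. -/
def opX (ℓ : ℕ) : V ℓ →ₗ[Fh] V ℓ :=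
  Finsupp.lsum Fh fun A =>
    LinearMap.toSpanSingleton Fh (V ℓ)
      (((((A.1.2 : ℚ) - (A.1.1 : ℚ) - (2 * ℓ + 1)) /
            ((A.1.2 : ℚ) - (A.1.1 : ℚ) - (2 * ℓ + 1) / 2) : ℚ) : Fh) •
          ket ℓ (A.1.1, A.1.2 + 1) +
        ((((A.1.2 : ℚ) - (A.1.1 : ℚ)) /
            ((A.1.2 : ℚ) - (A.1.1 : ℚ) - (2 * ℓ + 1) / 2) : ℚ) : Fh) •
          ket ℓ (A.1.1 + 1, A.1.2))

/-- `Y |A₁,A₂⟩ = ((A₂-A₁)((2ℓ+1)/2-A₂)ℏ/(A₂-A₁-(2ℓ+1)/2)) |A₁,A₂-1⟩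
              + (A₁(2ℓ+1-A₂+A₁)ℏ/(A₂-A₁-(2ℓ+1)/2)) |A₁-1,A₂⟩`. -/
def opY (ℓ : ℕ) : V ℓ →ₗ[Fh] V ℓ :=
  Finsupp.lsum Fh fun A =>
    LinearMap.toSpanSingleton Fh (V ℓ)
      ((((((A.1.2 : ℚ) - (A.1.1 : ℚ)) * ((2 * ℓ + 1) / 2 - (A.1.2 : ℚ)) /
            ((A.1.2 : ℚ) - (A.1.1 : ℚ) - (2 * ℓ + 1) / 2) : ℚ) : Fh) * hb) •
          ket ℓ (A.1.1, A.1.2 - 1) +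
        (((((A.1.1 : ℚ) * (2 * ℓ + 1 - (A.1.2 : ℚ) + (A.1.1 : ℚ))) /
            ((A.1.2 : ℚ) - (A.1.1 : ℚ) - (2 * ℓ + 1) / 2) : ℚ) : Fh) * hb) •
          ket ℓ (A.1.1 - 1, A.1.2))

/-
`X` and `Y` move a basis vector one step along the lattice of indices, so `[X,Y] |A₁,A₂⟩` only
has components along `|A₁,A₂⟩` and `|A₁±1,A₂∓1⟩`. The two off-diagonal coefficients agree
factor by factor, and the diagonal one is a rational identity equal to `2ℏ`, whose denominators
`d, d ± 1` with `d = A₂ - A₁ - (2ℓ+1)/2` are half-integers. At the boundary of the admissible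
range the coefficient of every step leaving it vanishes, so the formulas on basis vectors can be
composed as if all indices were admissible.
-/

section Coefficients

variable {K : Type*} [Field K] (m a₁ a₂ : K)

/- With `m = 2ℓ + 1`: `X` sends `|a₁,a₂⟩` up to `|a₁,a₂+1⟩` and right to `|a₁+1,a₂⟩`,
`Y` (up to the factor `ℏ`) down to `|a₁,a₂-1⟩` and left to `|a₁-1,a₂⟩`. -/

def xUp : K := (a₂ - a₁ - m) / (a₂ - a₁ - m / 2)

def xRight : K := (a₂ - a₁) / (a₂ - a₁ - m / 2)

def yDown : K := (a₂ - a₁) * (m / 2 - a₂) / (a₂ - a₁ - m / 2)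

def yLeft : K := a₁ * (m - a₂ + a₁) / (a₂ - a₁ - m / 2)

theorem yDown_mul_xRight :
    yDown m a₁ a₂ * xRight m a₁ (a₂ - 1) = xRight m a₁ a₂ * yDown m (a₁ + 1) a₂ := by
  simp only [yDown, xRight]; ring

theorem yLeft_mul_xUp :
    yLeft m a₁ a₂ * xUp m (a₁ - 1) a₂ = xUp m a₁ a₂ * yLeft m a₁ (a₂ + 1) := by
  simp only [yLeft, xUp]; ring

theorem commutator_coeff_diagonal [CharZero K] (h₀ : a₂ - a₁ - m / 2 ≠ 0)
    (hm : a₂ - a₁ - m / 2 - 1 ≠ 0) (hp : a₂ - a₁ - m / 2 + 1 ≠ 0) :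
    yDown m a₁ a₂ * xUp m a₁ (a₂ - 1) + yLeft m a₁ a₂ * xRight m (a₁ - 1) a₂ -
      (xUp m a₁ a₂ * yDown m a₁ (a₂ + 1) + xRight m a₁ a₂ * yLeft m (a₁ + 1) a₂) = 2 := by
  simp only [yDown, yLeft, xUp, xRight]
  rw [show a₂ - 1 - a₁ - m / 2 = a₂ - a₁ - m / 2 - 1 by ring,
    show a₂ - (a₁ - 1) - m / 2 = a₂ - a₁ - m / 2 + 1 by ring,
    show a₂ + 1 - a₁ - m / 2 = a₂ - a₁ - m / 2 + 1 by ring,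
    show a₂ - (a₁ + 1) - m / 2 = a₂ - a₁ - m / 2 - 1 by ring]
  rw [div_mul_div_comm, div_mul_div_comm, div_mul_div_comm, div_mul_div_comm,
    div_add_div _ _ (mul_ne_zero h₀ hm) (mul_ne_zero h₀ hp),
    div_add_div _ _ (mul_ne_zero h₀ hp) (mul_ne_zero h₀ hm), div_sub_div _ _
      (mul_ne_zero (mul_ne_zero h₀ hm) (mul_ne_zero h₀ hp))
      (mul_ne_zero (mul_ne_zero h₀ hp) (mul_ne_zero h₀ hm)), div_eq_iff (by positivity)]
  ring

end Coefficients

theorem intCast_sub_half_odd_ne_zero (n k : ℤ) : (n : ℚ) - (2 * k + 1) / 2 ≠ 0 := by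
  intro h
  have : (2 * n : ℚ) = 2 * k + 1 := by linarith
  norm_cast at this
  omega

section Operators

variable {ℓ : ℕ} {A₁ A₂ : ℤ}

-- `RatFunc.instAlgebraOfPolynomial` also produces an `Algebra ℕ Fh`, without the scalar tower
-- over `V ℓ` that `module` needs.
attribute [local instance] Semiring.toNatAlgebra Ring.toIntAlgebra

theorem opX_ket (h : Adm ℓ (A₁, A₂)) :
    opX ℓ (ket ℓ (A₁, A₂)) =
      ((xUp (2 * ℓ + 1) (A₁ : ℚ) A₂ : ℚ) : Fh) • ket ℓ (A₁, A₂ + 1) +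
        ((xRight (2 * ℓ + 1) (A₁ : ℚ) A₂ : ℚ) : Fh) • ket ℓ (A₁ + 1, A₂) := by
  rw [ket, dif_pos h, opX, Finsupp.lsum_single, LinearMap.toSpanSingleton_apply, one_smul]
  rfl

theorem opY_ket (h : Adm ℓ (A₁, A₂)) :
    opY ℓ (ket ℓ (A₁, A₂)) =
      ((yDown (2 * ℓ + 1) (A₁ : ℚ) A₂ : ℚ) * hb) • ket ℓ (A₁, A₂ - 1) +
        ((yLeft (2 * ℓ + 1) (A₁ : ℚ) A₂ : ℚ) * hb) • ket ℓ (A₁ - 1, A₂) := by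
  rw [ket, dif_pos h, opY, Finsupp.lsum_single, LinearMap.toSpanSingleton_apply, one_smul]
  rfl

theorem opX_smul_ket {c : Fh} (hc : ¬Adm ℓ (A₁, A₂) → c = 0) :
    opX ℓ (c • ket ℓ (A₁, A₂)) =
      (c * (xUp (2 * ℓ + 1) (A₁ : ℚ) A₂ : ℚ)) • ket ℓ (A₁, A₂ + 1) +
        (c * (xRight (2 * ℓ + 1) (A₁ : ℚ) A₂ : ℚ)) • ket ℓ (A₁ + 1, A₂) := by
  by_cases h : Adm ℓ (A₁, A₂)
  · rw [map_smul, opX_ket h, smul_add, smul_smul, smul_smul]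
  · simp [hc h]

theorem opY_smul_ket {c : Fh} (hc : ¬Adm ℓ (A₁, A₂) → c = 0) :
    opY ℓ (c • ket ℓ (A₁, A₂)) =
      (c * ((yDown (2 * ℓ + 1) (A₁ : ℚ) A₂ : ℚ) * hb)) • ket ℓ (A₁, A₂ - 1) +
        (c * ((yLeft (2 * ℓ + 1) (A₁ : ℚ) A₂ : ℚ) * hb)) • ket ℓ (A₁ - 1, A₂) := by
  by_cases h : Adm ℓ (A₁, A₂)
  · rw [map_smul, opY_ket h, smul_add, smul_smul, smul_smul]
  · simp [hc h]

theorem xUp_eq_zero_of_not_adm (hA : Adm ℓ (A₁, A₂)) (h : ¬Adm ℓ (A₁, A₂ + 1)) :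
    xUp (2 * ℓ + 1 : ℚ) A₁ A₂ = 0 := by
  obtain rfl : A₂ = A₁ + (2 * ℓ + 1) := by unfold Adm at hA h; omega
  simp [xUp]

theorem xRight_eq_zero_of_not_adm (hA : Adm ℓ (A₁, A₂)) (h : ¬Adm ℓ (A₁ + 1, A₂)) :
    xRight (2 * ℓ + 1 : ℚ) A₁ A₂ = 0 := by
  obtain rfl : A₂ = A₁ := by unfold Adm at hA h; omega
  simp [xRight]

theorem yDown_eq_zero_of_not_adm (hA : Adm ℓ (A₁, A₂)) (h : ¬Adm ℓ (A₁, A₂ - 1)) :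
    yDown (2 * ℓ + 1 : ℚ) A₁ A₂ = 0 := by
  obtain rfl : A₂ = A₁ := by unfold Adm at hA h; omega
  simp [yDown]

theorem yLeft_eq_zero_of_not_adm (hA : Adm ℓ (A₁, A₂)) (h : ¬Adm ℓ (A₁ - 1, A₂)) :
    yLeft (2 * ℓ + 1 : ℚ) A₁ A₂ = 0 := by
  obtain rfl | rfl : A₁ = 0 ∨ A₂ = A₁ + (2 * ℓ + 1) := by unfold Adm at hA h; omega
  all_goals simp [yLeft]

theorem commutator_ket (hA : Adm ℓ (A₁, A₂)) :
    opX ℓ (opY ℓ (ket ℓ (A₁, A₂))) - opY ℓ (opX ℓ (ket ℓ (A₁, A₂))) =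
      (2 * hb) • ket ℓ (A₁, A₂) := by
  rw [opY_ket hA, opX_ket hA, map_add, map_add,
    opX_smul_ket fun h => by simp [yDown_eq_zero_of_not_adm hA h],
    opX_smul_ket fun h => by simp [yLeft_eq_zero_of_not_adm hA h],
    opY_smul_ket fun h => by simp [xUp_eq_zero_of_not_adm hA h],
    opY_smul_ket fun h => by simp [xRight_eq_zero_of_not_adm hA h]]
  push_cast
  simp only [sub_add_cancel, add_sub_cancel_right]
  have hden (j : ℤ) : ((A₂ : ℚ) - A₁ - (2 * ℓ + 1 : ℚ) / 2 + j) ≠ 0 := by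
    have := intCast_sub_half_odd_ne_zero (A₂ - A₁ + j) ℓ
    push_cast at this
    convert this using 1; ring
  have hdiag := congrArg (Rat.cast : ℚ → Fh)
    (commutator_coeff_diagonal (2 * ℓ + 1 : ℚ) A₁ A₂ (by simpa using hden 0)
      (by simpa [sub_eq_add_neg] using hden (-1)) (by simpa using hden 1))
  have hdown := congrArg (Rat.cast : ℚ → Fh) (yDown_mul_xRight (2 * ℓ + 1 : ℚ) A₁ A₂)
  have hleft := congrArg (Rat.cast : ℚ → Fh) (yLeft_mul_xUp (2 * ℓ + 1 : ℚ) A₁ A₂)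
  push_cast at hdiag hdown hleft
  linear_combination (norm := module) (hb * hdiag) • ket ℓ (A₁, A₂) +
    (hb * hdown) • ket ℓ (A₁ + 1, A₂ - 1) + (hb * hleft) • ket ℓ (A₁ - 1, A₂ + 1)

end Operators

/-- the operators `X` and `Y` satisfy `[X, Y] = 2ℏ` on `V`. -/
theorem stmt7 (ℓ : ℕ) :
    opX ℓ ∘ₗ opY ℓ - opY ℓ ∘ₗ opX ℓ = (2 * hb) • (LinearMap.id : V ℓ →ₗ[Fh] V ℓ) := by
  ext ⟨⟨A₁, A₂⟩, hA⟩ : 2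
  simpa [ket, hA] using commutator_ket hA
end
end

section
/- With the operators E, F, H, X, Y defined on V as above (indexed by 0 ≤ A_1 ≤ A_2 ≤ A_1+2ℓ+1), the relations [E,X] = 0, [F,Y] = 0, [H,X] = ℏX, [H,Y] = -ℏY, [E,Y] = ℏX, and [F,X] = ℏY hold. -/
attribute [local instance] Classical.propDecidable

noncomputable section

/-! Embed `V` in the free module on all of `ℤ × ℤ`. There every operator is a sum of weighted
shifts `|A⟩ ↦ c(A) |A + d⟩` with the same coefficients, and no boundary conditions arise; the
embedding intertwines the two versions because each coefficient vanishes exactly where its shift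
leaves the admissible region. The commutator of two weighted shifts is the weighted shift by
`d + d'` with coefficient `c'(A) c(A + d') - c(A) c'(A + d)`, so every relation reduces to an
identity of rational functions of `A`, all of whose fractions share the denominator
`A₂ - A₁ - (2ℓ+1)/2`, which is invariant under the diagonal shift `A ↦ A + (n, n)`. -/

namespace LinearMap

variable {R M N : Type*} [CommRing R] [AddCommGroup M] [AddCommGroup N] [Module R M] [Module R N]

def Intertwines (i : M →ₗ[R] N) (f : M →ₗ[R] M) (F : N →ₗ[R] N) : Prop :=
  i ∘ₗ f = F ∘ₗ i

namespace Intertwines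

variable {i : M →ₗ[R] N} {f g : M →ₗ[R] M} {F G : N →ₗ[R] N}

theorem comp (hf : i.Intertwines f F) (hg : i.Intertwines g G) :
    i.Intertwines (f ∘ₗ g) (F ∘ₗ G) := by
  rw [Intertwines, ← comp_assoc, hf, comp_assoc, hg, comp_assoc]

theorem sub (hf : i.Intertwines f F) (hg : i.Intertwines g G) :
    i.Intertwines (f - g) (F - G) := by
  rw [Intertwines, comp_sub, sub_comp, hf, hg]

theorem smul (c : R) (hf : i.Intertwines f F) : i.Intertwines (c • f) (c • F) := by
  rw [Intertwines, comp_smul, smul_comp, hf]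

theorem neg (hf : i.Intertwines f F) : i.Intertwines (-f) (-F) := by
  rw [Intertwines, comp_neg, neg_comp, hf]

theorem zero : i.Intertwines 0 0 := by
  rw [Intertwines, comp_zero, zero_comp]

theorem eq_of_injective (hi : Function.Injective i) (hf : i.Intertwines f F)
    (hg : i.Intertwines g G) (h : F = G) : f = g := by
  subst h
  exact ext fun v => hi (congr($hf v).trans congr($hg v).symm)

end Intertwines

theorem comp_add_sub_add_comp (S T₁ T₂ : M →ₗ[R] M) :
    S ∘ₗ (T₁ + T₂) - (T₁ + T₂) ∘ₗ S = (S ∘ₗ T₁ - T₁ ∘ₗ S) + (S ∘ₗ T₂ - T₂ ∘ₗ S) := by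
  rw [comp_add, add_comp]
  exact add_sub_add_comm _ _ _ _

end LinearMap

namespace Finsupp

variable {K M : Type*} [CommRing K] [AddCommMonoid M]

def shiftOp (c : M → K) (d : M) : (M →₀ K) →ₗ[K] (M →₀ K) :=
  lsum K fun A => LinearMap.toSpanSingleton K _ (single (A + d) (c A))

@[simp]
theorem shiftOp_single (c : M → K) (d A : M) (b : K) :
    shiftOp c d (single A b) = single (A + d) (b * c A) := by
  simp [shiftOp, smul_single]

theorem smul_shiftOp (a : K) (c : M → K) (d : M) : a • shiftOp c d = shiftOp (a • c) d := by
  refine lhom_ext fun A b => ?_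
  rw [LinearMap.smul_apply, shiftOp_single, shiftOp_single, smul_single, smul_eq_mul,
    Pi.smul_apply, smul_eq_mul, mul_left_comm]

theorem shiftOp_add_shiftOp_eq_zero {c₁ c₂ : M → K} (d₁ d₂ : M) (h₁ : ∀ A, c₁ A = 0)
    (h₂ : ∀ A, c₂ A = 0) : shiftOp c₁ d₁ + shiftOp c₂ d₂ = 0 := by
  refine lhom_ext fun A b => ?_
  simp [h₁, h₂]

theorem shiftOp_commutator (c c' : M → K) (d d' : M) :
    shiftOp c d ∘ₗ shiftOp c' d' - shiftOp c' d' ∘ₗ shiftOp c d =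
      shiftOp (fun A => c' A * c (A + d') - c A * c' (A + d)) (d + d') := by
  refine lhom_ext fun A b => ?_
  simp only [LinearMap.sub_apply, LinearMap.comp_apply, shiftOp_single]
  rw [add_assoc, add_assoc, add_comm d', ← single_sub, mul_sub, mul_assoc, mul_assoc]

end Finsupp

def coefDenom (ℓ : ℕ) (A : ℤ × ℤ) : ℚ := (A.2 : ℚ) - (A.1 : ℚ) - (2 * ℓ + 1) / 2

def coefF (ℓ : ℕ) (A : ℤ × ℤ) : ℚ := (A.1 : ℚ) * ((2 * ℓ + 1) / 2 - (A.2 : ℚ))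

def coefH (ℓ : ℕ) (A : ℤ × ℤ) : ℚ := (A.1 : ℚ) + (A.2 : ℚ) + 1 - (2 * ℓ + 1) / 2

def coefX₁ (ℓ : ℕ) (A : ℤ × ℤ) : ℚ := ((A.2 : ℚ) - (A.1 : ℚ) - (2 * ℓ + 1)) / coefDenom ℓ A

def coefX₂ (ℓ : ℕ) (A : ℤ × ℤ) : ℚ := ((A.2 : ℚ) - (A.1 : ℚ)) / coefDenom ℓ A

def coefY₁ (ℓ : ℕ) (A : ℤ × ℤ) : ℚ :=
  ((A.2 : ℚ) - (A.1 : ℚ)) * ((2 * ℓ + 1) / 2 - (A.2 : ℚ)) / coefDenom ℓ A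

def coefY₂ (ℓ : ℕ) (A : ℤ × ℤ) : ℚ :=
  (A.1 : ℚ) * (2 * ℓ + 1 - (A.2 : ℚ) + (A.1 : ℚ)) / coefDenom ℓ A

section CoefficientIdentities

variable (ℓ : ℕ) (A : ℤ × ℤ)

theorem coefDenom_add_diag (n : ℤ) : coefDenom ℓ (A + (n, n)) = coefDenom ℓ A := by
  simp only [coefDenom, Prod.fst_add, Prod.snd_add]; push_cast; ring

theorem coefX₁_add_diag (n : ℤ) : coefX₁ ℓ (A + (n, n)) = coefX₁ ℓ A := by
  simp only [coefX₁, coefDenom_add_diag, Prod.fst_add, Prod.snd_add]; push_cast; ring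

theorem coefX₂_add_diag (n : ℤ) : coefX₂ ℓ (A + (n, n)) = coefX₂ ℓ A := by
  simp only [coefX₂, coefDenom_add_diag, Prod.fst_add, Prod.snd_add]; push_cast; ring

theorem coefH_add (B : ℤ × ℤ) : coefH ℓ (A + B) = coefH ℓ A + B.1 + B.2 := by
  simp only [coefH, Prod.fst_add, Prod.snd_add]; push_cast; ring

theorem coefY₁_add_one_one : coefY₁ ℓ (A + (1, 1)) = coefY₁ ℓ A - coefX₂ ℓ A := by
  simp only [coefY₁, coefX₂, coefDenom_add_diag, Prod.fst_add, Prod.snd_add]; push_cast; ring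

theorem coefY₂_add_one_one : coefY₂ ℓ (A + (1, 1)) = coefY₂ ℓ A - coefX₁ ℓ A := by
  simp only [coefY₂, coefX₁, coefDenom_add_diag, Prod.fst_add, Prod.snd_add]; push_cast; ring

theorem coefY₁_eq_coefX₂_mul :
    coefY₁ ℓ A = coefX₂ ℓ A * (coefF ℓ (A + (1, 0)) - coefF ℓ A) := by
  simp only [coefY₁, coefX₂, coefF, Prod.fst_add, Prod.snd_add]; push_cast; ring

theorem coefY₂_eq_coefX₁_mul :
    coefY₂ ℓ A = coefX₁ ℓ A * (coefF ℓ (A + (0, 1)) - coefF ℓ A) := by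
  simp only [coefY₂, coefX₁, coefF, Prod.fst_add, Prod.snd_add]; push_cast; ring

variable (K : Type*) [Field K] [CharZero K]

theorem coefY₁_mul_coefF :
    (coefY₁ ℓ A * coefF ℓ (A + (0, -1)) : K) = coefF ℓ A * coefY₁ ℓ (A + (-1, -1)) := by
  simp only [coefY₁, coefF, coefDenom_add_diag, Prod.fst_add, Prod.snd_add]; push_cast; ring

theorem coefY₂_mul_coefF :
    (coefY₂ ℓ A * coefF ℓ (A + (-1, 0)) : K) = coefF ℓ A * coefY₂ ℓ (A + (-1, -1)) := by
  simp only [coefY₂, coefF, coefDenom_add_diag, Prod.fst_add, Prod.snd_add]; push_cast; ring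

end CoefficientIdentities

section FreeOperators

open Finsupp LinearMap

variable {K : Type*} [Field K] (ℓ : ℕ) (ħ : K)

def freeE : (ℤ × ℤ →₀ K) →ₗ[K] (ℤ × ℤ →₀ K) := shiftOp 1 (1, 1)

def freeF : (ℤ × ℤ →₀ K) →ₗ[K] (ℤ × ℤ →₀ K) :=
  shiftOp (fun A => (coefF ℓ A : K) * ħ ^ 2) (-1, -1)

def freeH : (ℤ × ℤ →₀ K) →ₗ[K] (ℤ × ℤ →₀ K) :=
  shiftOp (fun A => (coefH ℓ A : K) * ħ) 0

def freeX : (ℤ × ℤ →₀ K) →ₗ[K] (ℤ × ℤ →₀ K) :=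
  shiftOp (fun A => (coefX₁ ℓ A : K)) (0, 1) + shiftOp (fun A => (coefX₂ ℓ A : K)) (1, 0)

def freeY : (ℤ × ℤ →₀ K) →ₗ[K] (ℤ × ℤ →₀ K) :=
  shiftOp (fun A => (coefY₁ ℓ A : K) * ħ) (0, -1) +
    shiftOp (fun A => (coefY₂ ℓ A : K) * ħ) (-1, 0)

theorem freeE_bracket_freeX :
    freeE ∘ₗ freeX ℓ - freeX ℓ ∘ₗ freeE = (0 : (ℤ × ℤ →₀ K) →ₗ[K] (ℤ × ℤ →₀ K)) := by
  rw [freeE, freeX, comp_add_sub_add_comp, shiftOp_commutator, shiftOp_commutator]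
  refine shiftOp_add_shiftOp_eq_zero _ _ (fun A => ?_) (fun A => ?_) <;>
    simp only [Pi.one_apply, mul_one, one_mul, coefX₁_add_diag, coefX₂_add_diag, sub_self]

variable [CharZero K]

theorem freeF_bracket_freeY : freeF ℓ ħ ∘ₗ freeY ℓ ħ - freeY ℓ ħ ∘ₗ freeF ℓ ħ = 0 := by
  rw [freeF, freeY, comp_add_sub_add_comp, shiftOp_commutator, shiftOp_commutator]
  refine shiftOp_add_shiftOp_eq_zero _ _ (fun A => ?_) (fun A => ?_)
  · linear_combination ħ ^ 3 * coefY₁_mul_coefF ℓ A K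
  · linear_combination ħ ^ 3 * coefY₂_mul_coefF ℓ A K

theorem freeH_bracket_freeX : freeH ℓ ħ ∘ₗ freeX ℓ - freeX ℓ ∘ₗ freeH ℓ ħ = ħ • freeX ℓ := by
  rw [freeH, freeX, comp_add_sub_add_comp, shiftOp_commutator, shiftOp_commutator, smul_add,
    smul_shiftOp, smul_shiftOp, zero_add, zero_add]
  congr 2 <;> funext A <;>
    simp only [add_zero, coefH_add, Pi.smul_apply, smul_eq_mul] <;> push_cast <;> ring

theorem freeH_bracket_freeY :
    freeH ℓ ħ ∘ₗ freeY ℓ ħ - freeY ℓ ħ ∘ₗ freeH ℓ ħ = -(ħ • freeY ℓ ħ) := by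
  refine Eq.trans ?_ (neg_smul ħ (freeY ℓ ħ))
  rw [freeH, freeY, comp_add_sub_add_comp, shiftOp_commutator, shiftOp_commutator, smul_add,
    smul_shiftOp, smul_shiftOp, zero_add, zero_add]
  congr 2 <;> funext A <;>
    simp only [add_zero, coefH_add, Pi.smul_apply, smul_eq_mul] <;> push_cast <;> ring

theorem freeE_bracket_freeY : freeE ∘ₗ freeY ℓ ħ - freeY ℓ ħ ∘ₗ freeE = ħ • freeX ℓ := by
  rw [freeE, freeY, freeX, comp_add_sub_add_comp, shiftOp_commutator, shiftOp_commutator,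
    smul_add, smul_shiftOp, smul_shiftOp, add_comm]
  simp only [Prod.mk_add_mk, Int.reduceAdd]
  congr 2 <;> funext A <;>
    simp only [Pi.one_apply, coefY₁_add_one_one, coefY₂_add_one_one, Pi.smul_apply,
      smul_eq_mul] <;> push_cast <;> ring

theorem freeF_bracket_freeX : freeF ℓ ħ ∘ₗ freeX ℓ - freeX ℓ ∘ₗ freeF ℓ ħ = ħ • freeY ℓ ħ := by
  rw [freeF, freeY, freeX, comp_add_sub_add_comp, shiftOp_commutator, shiftOp_commutator,
    smul_add, smul_shiftOp, smul_shiftOp, add_comm]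
  simp only [Prod.mk_add_mk, Int.reduceAdd]
  congr 2 <;> funext A <;>
    simp only [coefX₁_add_diag, coefX₂_add_diag, coefY₁_eq_coefX₂_mul, coefY₂_eq_coefX₁_mul,
      Pi.smul_apply, smul_eq_mul] <;> push_cast <;> ring

end FreeOperators

section Inclusion

open Finsupp LinearMap

variable (ℓ : ℕ)

def incl : V ℓ →ₗ[Fh] (ℤ × ℤ →₀ Fh) := lmapDomain Fh Fh Subtype.val

theorem incl_injective : Function.Injective (incl ℓ) :=
  mapDomain_injective Subtype.val_injective

theorem incl_single (a : {A : ℤ × ℤ // Adm ℓ A}) (b : Fh) :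
    incl ℓ (single a b) = single a.1 b :=
  mapDomain_single

variable {ℓ}

theorem incl_smul_ket {c : Fh} {B : ℤ × ℤ} (hc : ¬ Adm ℓ B → c = 0) :
    incl ℓ (c • ket ℓ B) = single B c := by
  by_cases hB : Adm ℓ B
  · rw [ket, dif_pos hB, smul_single_one, incl_single]
  · rw [hc hB, zero_smul, map_zero, single_zero]

section Boundary

variable {a₁ a₂ : ℤ}

theorem coefF_eq_zero_of_not_adm (hA : Adm ℓ (a₁, a₂)) (h : ¬ Adm ℓ (a₁ - 1, a₂ - 1)) :
    coefF ℓ (a₁, a₂) = 0 := by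
  obtain rfl : a₁ = 0 := by unfold Adm at *; omega
  simp [coefF]

theorem coefX₁_eq_zero_of_not_adm (hA : Adm ℓ (a₁, a₂)) (h : ¬ Adm ℓ (a₁, a₂ + 1)) :
    coefX₁ ℓ (a₁, a₂) = 0 := by
  obtain rfl : a₂ = a₁ + (2 * ℓ + 1) := by unfold Adm at *; omega
  simp [coefX₁]

theorem coefX₂_eq_zero_of_not_adm (hA : Adm ℓ (a₁, a₂)) (h : ¬ Adm ℓ (a₁ + 1, a₂)) :
    coefX₂ ℓ (a₁, a₂) = 0 := by
  obtain rfl : a₂ = a₁ := by unfold Adm at *; omega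
  simp [coefX₂]

theorem coefY₁_eq_zero_of_not_adm (hA : Adm ℓ (a₁, a₂)) (h : ¬ Adm ℓ (a₁, a₂ - 1)) :
    coefY₁ ℓ (a₁, a₂) = 0 := by
  obtain rfl : a₂ = a₁ := by unfold Adm at *; omega
  simp [coefY₁]

theorem coefY₂_eq_zero_of_not_adm (hA : Adm ℓ (a₁, a₂)) (h : ¬ Adm ℓ (a₁ - 1, a₂)) :
    coefY₂ ℓ (a₁, a₂) = 0 := by
  obtain rfl | rfl : a₁ = 0 ∨ a₂ = a₁ + (2 * ℓ + 1) := by unfold Adm at *; omega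
  all_goals simp [coefY₂]

end Boundary

section SingleFormulas

variable {a₁ a₂ : ℤ} (hA : Adm ℓ (a₁, a₂)) (b : Fh)

theorem opE_single : opE ℓ (single ⟨(a₁, a₂), hA⟩ b) = b • ket ℓ (a₁ + 1, a₂ + 1) :=
  lsum_single _ _ _ _

theorem opF_single :
    opF ℓ (single ⟨(a₁, a₂), hA⟩ b) =
      b • (((coefF ℓ (a₁, a₂) : Fh) * hb ^ 2) • ket ℓ (a₁ - 1, a₂ - 1)) :=
  lsum_single _ _ _ _

theorem opH_single :
    opH ℓ (single ⟨(a₁, a₂), hA⟩ b) = b • (((coefH ℓ (a₁, a₂) : Fh) * hb) • ket ℓ (a₁, a₂)) :=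
  lsum_single _ _ _ _

theorem opX_single :
    opX ℓ (single ⟨(a₁, a₂), hA⟩ b) =
      b • ((coefX₁ ℓ (a₁, a₂) : Fh) • ket ℓ (a₁, a₂ + 1) +
        (coefX₂ ℓ (a₁, a₂) : Fh) • ket ℓ (a₁ + 1, a₂)) :=
  lsum_single _ _ _ _

theorem opY_single :
    opY ℓ (single ⟨(a₁, a₂), hA⟩ b) =
      b • (((coefY₁ ℓ (a₁, a₂) : Fh) * hb) • ket ℓ (a₁, a₂ - 1) +
        ((coefY₂ ℓ (a₁, a₂) : Fh) * hb) • ket ℓ (a₁ - 1, a₂)) :=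
  lsum_single _ _ _ _

end SingleFormulas

variable (ℓ)

theorem intertwines_opE : (incl ℓ).Intertwines (opE ℓ) freeE := by
  refine lhom_ext ?_
  rintro ⟨⟨a₁, a₂⟩, hA⟩ b
  rw [comp_apply, comp_apply, opE_single, incl_smul_ket, incl_single, freeE, shiftOp_single]
  · simp only [Prod.mk_add_mk, Pi.one_apply, mul_one]
  · intro h
    exact (h (by unfold Adm at *; omega)).elim

theorem intertwines_opF : (incl ℓ).Intertwines (opF ℓ) (freeF ℓ hb) := by
  refine lhom_ext ?_
  rintro ⟨⟨a₁, a₂⟩, hA⟩ b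
  rw [comp_apply, comp_apply, opF_single, map_smul, incl_smul_ket, incl_single, freeF,
    shiftOp_single]
  · simp only [smul_single, smul_eq_mul, Prod.mk_add_mk, ← sub_eq_add_neg]
  · intro h
    rw [coefF_eq_zero_of_not_adm hA h, Rat.cast_zero, zero_mul]

theorem intertwines_opH : (incl ℓ).Intertwines (opH ℓ) (freeH ℓ hb) := by
  refine lhom_ext ?_
  rintro ⟨⟨a₁, a₂⟩, hA⟩ b
  rw [comp_apply, comp_apply, opH_single, map_smul, incl_smul_ket, incl_single, freeH,
    shiftOp_single, add_zero, smul_single, smul_eq_mul]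
  exact absurd hA

theorem intertwines_opX : (incl ℓ).Intertwines (opX ℓ) (freeX ℓ) := by
  refine lhom_ext ?_
  rintro ⟨⟨a₁, a₂⟩, hA⟩ b
  rw [comp_apply, comp_apply, opX_single, map_smul, map_add, incl_smul_ket, incl_smul_ket,
    incl_single, freeX, LinearMap.add_apply, shiftOp_single, shiftOp_single]
  · simp only [smul_add, smul_single, smul_eq_mul, Prod.mk_add_mk, add_zero]
  · intro h
    rw [coefX₂_eq_zero_of_not_adm hA h, Rat.cast_zero]
  · intro h
    rw [coefX₁_eq_zero_of_not_adm hA h, Rat.cast_zero]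

theorem intertwines_opY : (incl ℓ).Intertwines (opY ℓ) (freeY ℓ hb) := by
  refine lhom_ext ?_
  rintro ⟨⟨a₁, a₂⟩, hA⟩ b
  rw [comp_apply, comp_apply, opY_single, map_smul, map_add, incl_smul_ket, incl_smul_ket,
    incl_single, freeY, LinearMap.add_apply, shiftOp_single, shiftOp_single]
  · simp only [smul_add, smul_single, smul_eq_mul, Prod.mk_add_mk, add_zero, ← sub_eq_add_neg]
  · intro h
    rw [coefY₂_eq_zero_of_not_adm hA h, Rat.cast_zero, zero_mul]
  · intro h
    rw [coefY₁_eq_zero_of_not_adm hA h, Rat.cast_zero, zero_mul]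

end Inclusion

/-- the relations `[E,X] = 0`, `[F,Y] = 0`, `[H,X] = ℏX`, `[H,Y] = -ℏY`,
`[E,Y] = ℏX` and `[F,X] = ℏY` hold on `V`. -/
theorem stmt8 (ℓ : ℕ) :
    opE ℓ ∘ₗ opX ℓ - opX ℓ ∘ₗ opE ℓ = 0 ∧
    opF ℓ ∘ₗ opY ℓ - opY ℓ ∘ₗ opF ℓ = 0 ∧
    opH ℓ ∘ₗ opX ℓ - opX ℓ ∘ₗ opH ℓ = hb • opX ℓ ∧
    opH ℓ ∘ₗ opY ℓ - opY ℓ ∘ₗ opH ℓ = -(hb • opY ℓ) ∧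
    opE ℓ ∘ₗ opY ℓ - opY ℓ ∘ₗ opE ℓ = hb • opX ℓ ∧
    opF ℓ ∘ₗ opX ℓ - opX ℓ ∘ₗ opF ℓ = hb • opY ℓ := by
  have hi := incl_injective ℓ
  have hE := intertwines_opE ℓ
  have hF := intertwines_opF ℓ
  have hH := intertwines_opH ℓ
  have hX := intertwines_opX ℓ
  have hY := intertwines_opY ℓ
  exact ⟨((hE.comp hX).sub (hX.comp hE)).eq_of_injective hi .zero (freeE_bracket_freeX ℓ),
    ((hF.comp hY).sub (hY.comp hF)).eq_of_injective hi .zero (freeF_bracket_freeY ℓ hb),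
    ((hH.comp hX).sub (hX.comp hH)).eq_of_injective hi (hX.smul hb) (freeH_bracket_freeX ℓ hb),
    ((hH.comp hY).sub (hY.comp hH)).eq_of_injective hi (hY.smul hb).neg
      (freeH_bracket_freeY ℓ hb),
    ((hE.comp hY).sub (hY.comp hE)).eq_of_injective hi (hX.smul hb) (freeE_bracket_freeY ℓ hb),
    ((hF.comp hX).sub (hX.comp hF)).eq_of_injective hi (hY.smul hb) (freeF_bracket_freeX ℓ hb)⟩
end
end

section
/- Let ℓ ≥ 0, k = 2ℓ+1. For integers 0 ≤ A_1 ≤ A_2, the set of Laurent polynomials u(t) over C with all terms of degree at most -A_1-1, such that w := -t^{A_2}u lies in C[[t]] and t^{A_1-A_2}(t^{2ℓ+1} - w²) lies in C[[t]], is nonempty if and only if A_2 - A_1 ≤ 2ℓ+1, in which case it is parameterized by polynomials w with nonzero terms only in degrees j satisfying ⌈(A_2-A_1)/2⌉ ≤ j ≤ A_2-1, i.e. it is an affine space of dimension ⌊(A_2-A_1)/2⌋ when A_2-A_1 ≤ 2ℓ+1 (with the convention that degree range may be empty). -/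
/-!
Since `k` is odd, the valuations of `t^k` and `w²` have different parities, so
`v(t^k - w²) = min(k, 2 v(w))`. Hence, with `N = A₂ - A₁`, the last condition on `u` says exactly
`N ≤ k` and `N ≤ 2 v(w)`, while the degree bound on `u` says `deg w ≤ N - 1`; the other two
conditions then hold automatically. As `u ↦ -t^A₂ u` is a bijection of Laurent series, the cell is
empty when `k < N` and otherwise the preimage of the space of such `w`.
-/

open HahnSeries

theorem HahnSeries.orderTop_sub_eq_min {Γ R : Type*} [LinearOrder Γ] [AddGroup R]
    {x y : HahnSeries Γ R} (h : x.orderTop ≠ y.orderTop) :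
    (x - y).orderTop = min x.orderTop y.orderTop := by
  rcases h.lt_or_gt with h | h
  · rw [orderTop_sub h, min_eq_left h.le]
  · rw [← neg_sub, orderTop_neg, orderTop_sub h, min_eq_right h.le]

theorem HahnSeries.coe_le_orderTop_iff {Γ R : Type*} [LinearOrder Γ] [Zero R]
    {x : HahnSeries Γ R} {g : Γ} : (g : WithTop Γ) ≤ x.orderTop ↔ ∀ j < g, x.coeff j = 0 := by
  simp [le_orderTop_iff_forall]

namespace LaurentSeries

theorem bijective_neg_single_one_mul {R : Type*} [Ring R] (a : ℤ) :
    Function.Bijective fun u : LaurentSeries R => -(single a (1 : R) * u) :=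
  neg_involutive.bijective.comp
    (Units.mulLeft_bijective ⟨single a 1, single (-a) 1, by simp, by simp⟩)

variable {R : Type*} [Ring R] [IsDomain R]

theorem coe_le_orderTop_sq_iff (w : LaurentSeries R) (N : ℤ) :
    (N : WithTop ℤ) ≤ (w ^ 2).orderTop ↔ ∀ m, w.coeff m ≠ 0 → N ≤ 2 * m := by
  rcases eq_or_ne w 0 with rfl | hw
  · simp
  obtain ⟨v, hv⟩ := WithTop.ne_top_iff_exists.1 (orderTop_ne_top.2 hw)
  rw [pow_two, orderTop_mul, ← hv, ← WithTop.coe_add, WithTop.coe_le_coe]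
  refine ⟨fun hN m hm => ?_, fun h => by simpa [two_mul] using h v (coeff_orderTop_ne hv.symm)⟩
  have : v ≤ m := WithTop.coe_le_coe.1 (hv ▸ orderTop_le_of_coeff_ne_zero hm)
  omega

theorem orderTop_sq_ne_of_odd (w : LaurentSeries R) {k : ℤ} (hk : Odd k) :
    (w ^ 2).orderTop ≠ k := by
  intro h
  rcases eq_or_ne w 0 with rfl | hw
  · simp at h
  obtain ⟨v, hv⟩ := WithTop.ne_top_iff_exists.1 (orderTop_ne_top.2 hw)
  rw [pow_two, orderTop_mul, ← hv, ← WithTop.coe_add, WithTop.coe_inj] at h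
  exact Int.not_even_iff_odd.2 hk ⟨v, h.symm⟩

theorem orderTop_single_sub_sq {k : ℤ} (hk : Odd k) (w : LaurentSeries R) :
    (single k (1 : R) - w ^ 2).orderTop = min (k : WithTop ℤ) (w ^ 2).orderTop := by
  have hsingle : (single k (1 : R)).orderTop = k := orderTop_single one_ne_zero
  rw [← hsingle]
  exact orderTop_sub_eq_min (hsingle ▸ (orderTop_sq_ne_of_odd w hk).symm)

theorem coe_le_orderTop_single_sub_sq_iff {k : ℤ} (hk : Odd k) (w : LaurentSeries R) (N : ℤ) :
    (N : WithTop ℤ) ≤ (single k (1 : R) - w ^ 2).orderTop ↔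
      N ≤ k ∧ ∀ m, w.coeff m ≠ 0 → N ≤ 2 * m := by
  rw [orderTop_single_sub_sq hk, le_min_iff, WithTop.coe_le_coe, coe_le_orderTop_sq_iff]

end LaurentSeries

open LaurentSeries

section

variable {R : Type*} [Ring R] [IsDomain R]

def schubertCell (k A₁ A₂ : ℤ) : Set (LaurentSeries R) :=
  {u | u.support.Finite ∧
    (∀ m : ℤ, u.coeff m ≠ 0 → m ≤ -A₁ - 1) ∧
    (∀ m : ℤ, m < 0 → (-(single A₂ (1 : R) * u)).coeff m = 0) ∧
    (∀ m : ℤ, m < A₂ - A₁ → (single k (1 : R) - (-(single A₂ (1 : R) * u)) ^ 2).coeff m = 0)}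

def schubertCellImage (N : ℤ) : Set (LaurentSeries R) :=
  {w | ∀ m : ℤ, w.coeff m ≠ 0 → N ≤ 2 * m ∧ m ≤ N - 1}

theorem mem_schubertCell_iff {k A₁ A₂ : ℤ} (hk : Odd k) (h : A₁ ≤ A₂) (u : LaurentSeries R) :
    u ∈ schubertCell k A₁ A₂ ↔
      A₂ - A₁ ≤ k ∧ -(single A₂ (1 : R) * u) ∈ schubertCellImage (A₂ - A₁) := by
  set w := -(single A₂ (1 : R) * u)
  have hw : ∀ m, w.coeff (m + A₂) = -u.coeff m := fun m => by simp [w, coeff_single_mul]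
  simp only [schubertCell, schubertCellImage, Set.mem_ofPred_eq, ← coe_le_orderTop_iff,
    coe_le_orderTop_single_sub_sq_iff hk]
  constructor
  · rintro ⟨-, hdeg, -, hN, hlow⟩
    refine ⟨hN, fun m hm => ⟨hlow m hm, ?_⟩⟩
    have := hdeg (m - A₂) (by rwa [← neg_ne_zero, ← hw, sub_add_cancel])
    omega
  · rintro ⟨hN, hbounds⟩
    have hu : ∀ m, u.coeff m ≠ 0 → A₂ - A₁ ≤ 2 * (m + A₂) ∧ m + A₂ ≤ A₂ - A₁ - 1 :=
      fun m hm => hbounds _ (by rwa [hw, neg_ne_zero])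
    refine ⟨(Set.finite_Icc (-A₂) (-A₁ - 1)).subset fun m hm => ?_, fun m hm => ?_,
      coe_le_orderTop_iff.2 fun m hm => ?_, hN, fun m hm => (hbounds m hm).1⟩
    · have := hu m hm
      rw [Set.mem_Icc]
      omega
    · have := hu m hm
      omega
    · by_contra hne
      have := hbounds m hne
      omega

theorem schubertCell_nonempty_iff {k A₁ A₂ : ℤ} (hk : Odd k) (h : A₁ ≤ A₂) :
    (schubertCell k A₁ A₂ : Set (LaurentSeries R)).Nonempty ↔ A₂ - A₁ ≤ k :=
  ⟨fun ⟨u, hu⟩ => ((mem_schubertCell_iff hk h u).1 hu).1,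
    fun hN => ⟨0, (mem_schubertCell_iff hk h 0).2 ⟨hN, by simp [schubertCellImage]⟩⟩⟩

theorem bijOn_schubertCell {k A₁ A₂ : ℤ} (hk : Odd k) (h : A₁ ≤ A₂) (hN : A₂ - A₁ ≤ k) :
    Set.BijOn (fun u : LaurentSeries R => -(single A₂ (1 : R) * u))
      (schubertCell k A₁ A₂) (schubertCellImage (A₂ - A₁)) := by
  have hcell : (schubertCell k A₁ A₂ : Set (LaurentSeries R)) =
      (fun u => -(single A₂ (1 : R) * u)) ⁻¹' schubertCellImage (A₂ - A₁) := by
    ext u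
    simp [mem_schubertCell_iff hk h, hN]
  exact hcell ▸ (bijective_neg_single_one_mul A₂).bijOn_preimage

end

theorem stmt13_general (ℓ : ℕ) (A₁ A₂ : ℤ) (h2 : A₁ ≤ A₂) :
    (({u : LaurentSeries ℂ | u.support.Finite ∧
        (∀ m : ℤ, u.coeff m ≠ 0 → m ≤ -A₁ - 1) ∧
        (∀ m : ℤ, m < 0 → (-(HahnSeries.single A₂ (1 : ℂ) * u)).coeff m = 0) ∧
        (∀ m : ℤ, m < A₂ - A₁ →
          (HahnSeries.single ((2 * ℓ + 1 : ℕ) : ℤ) (1 : ℂ) -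
            (-(HahnSeries.single A₂ (1 : ℂ) * u)) ^ 2).coeff m = 0)} : Set (LaurentSeries ℂ)).Nonempty
      ↔ A₂ - A₁ ≤ 2 * ℓ + 1) ∧
    (A₂ - A₁ ≤ 2 * ℓ + 1 →
      Set.BijOn (fun u : LaurentSeries ℂ => -(HahnSeries.single A₂ (1 : ℂ) * u))
        {u : LaurentSeries ℂ | u.support.Finite ∧
          (∀ m : ℤ, u.coeff m ≠ 0 → m ≤ -A₁ - 1) ∧
          (∀ m : ℤ, m < 0 → (-(HahnSeries.single A₂ (1 : ℂ) * u)).coeff m = 0) ∧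
          (∀ m : ℤ, m < A₂ - A₁ →
            (HahnSeries.single ((2 * ℓ + 1 : ℕ) : ℤ) (1 : ℂ) -
              (-(HahnSeries.single A₂ (1 : ℂ) * u)) ^ 2).coeff m = 0)}
        {w : LaurentSeries ℂ |
          ∀ m : ℤ, w.coeff m ≠ 0 → A₂ - A₁ ≤ 2 * m ∧ m ≤ A₂ - A₁ - 1}) := by
  have hk : Odd ((2 * ℓ + 1 : ℕ) : ℤ) := by exact_mod_cast odd_two_mul_add_one ℓ
  have hcast : ((2 * ℓ + 1 : ℕ) : ℤ) = 2 * ℓ + 1 := by push_cast; ring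
  rw [← hcast]
  exact ⟨schubertCell_nonempty_iff hk h2, bijOn_schubertCell hk h2⟩

/-- Schubert cells of the Hilbert scheme of `x² = t^(2ℓ+1)`.
For `0 ≤ A₁ ≤ A₂`, consider the set `S` of Laurent polynomials `u` (modelled as finitely
supported Laurent series) whose terms all have degree `≤ -A₁-1`, such that
`w := -t^(A₂) u ∈ ℂ[[t]]` and `t^(A₁-A₂)(t^(2ℓ+1) - w²) ∈ ℂ[[t]]`.  Then `S` is nonempty
iff `A₂ - A₁ ≤ 2ℓ+1`, and in that case `u ↦ w` is a bijection of `S` onto the set of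
polynomials `w` with nonzero terms only in degrees `j` with
`⌈(A₂-A₁)/2⌉ ≤ j` (i.e. `A₂-A₁ ≤ 2j`) and `j ≤ A₂-A₁-1`; in particular `S` is an affine
space of dimension `⌊(A₂-A₁)/2⌋`. -/
theorem stmt13 (ℓ : ℕ) (A₁ A₂ : ℤ) (h1 : 0 ≤ A₁) (h2 : A₁ ≤ A₂) :
    (({u : LaurentSeries ℂ | u.support.Finite ∧
        (∀ m : ℤ, u.coeff m ≠ 0 → m ≤ -A₁ - 1) ∧
        (∀ m : ℤ, m < 0 → (-(HahnSeries.single A₂ (1 : ℂ) * u)).coeff m = 0) ∧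
        (∀ m : ℤ, m < A₂ - A₁ →
          (HahnSeries.single ((2 * ℓ + 1 : ℕ) : ℤ) (1 : ℂ) -
            (-(HahnSeries.single A₂ (1 : ℂ) * u)) ^ 2).coeff m = 0)} : Set (LaurentSeries ℂ)).Nonempty
      ↔ A₂ - A₁ ≤ 2 * ℓ + 1) ∧
    (A₂ - A₁ ≤ 2 * ℓ + 1 →
      Set.BijOn (fun u : LaurentSeries ℂ => -(HahnSeries.single A₂ (1 : ℂ) * u))
        {u : LaurentSeries ℂ | u.support.Finite ∧
          (∀ m : ℤ, u.coeff m ≠ 0 → m ≤ -A₁ - 1) ∧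
          (∀ m : ℤ, m < 0 → (-(HahnSeries.single A₂ (1 : ℂ) * u)).coeff m = 0) ∧
          (∀ m : ℤ, m < A₂ - A₁ →
            (HahnSeries.single ((2 * ℓ + 1 : ℕ) : ℤ) (1 : ℂ) -
              (-(HahnSeries.single A₂ (1 : ℂ) * u)) ^ 2).coeff m = 0)}
        {w : LaurentSeries ℂ |
          ∀ m : ℤ, w.coeff m ≠ 0 → A₂ - A₁ ≤ 2 * m ∧ m ≤ A₂ - A₁ - 1}) :=
  stmt13_general ℓ A₁ A₂ h2
end

section
/- Let ℓ ≥ 0, ℏ ≠ 0, and let V, E, F, H, X, Y be the operators on the basis |A_1,A_2⟩ (0 ≤ A_1 ≤ A_2 ≤ A_1+2ℓ+1) defined previously. For each N with 0 ≤ N ≤ ℓ, the vector v_N = ∑_{j=0}^{N}(-1)^j · binomial(N,j) · ∏_{i=0}^{j-1} ((2ℓ+1-2i)(2ℓ+1-4(i+1)))/((2ℓ+1-2(N+i+1))(2ℓ+1-4i)) · |N-j, N+j⟩ satisfies Y v_N = 0. -/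
/-! On the antidiagonal `A₁ + A₂ = 2N`, `Y` sends `|N-j, N+j⟩` into the span of `|N-j, N+j-1⟩`
and `|N-j-1, N+j⟩`, and the second vector for `j` is the first one for `j + 1`. So `Y v_N = 0`
telescopes into a two-term recurrence between consecutive coefficients; the boundary terms vanish
because `|N, N-1⟩` and `|-1, 2N⟩` are out of range, while `N ≤ ℓ` keeps every `|N-j, N+j⟩` in
range. The coefficients of `v_N` satisfy the recurrence because the ratio of consecutive ones is
`-(N-j)/(j+1)` times the `j`-th factor of the product, and no denominator vanishes since `2ℓ+1`
is odd. -/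

attribute [local instance] Classical.propDecidable

noncomputable section

lemma ket_eq_zero_of_not_adm {ℓ : ℕ} {A : ℤ × ℤ} (h : ¬ Adm ℓ A) : ket ℓ A = 0 :=
  dif_neg h

def yCoeff₂ (ℓ : ℕ) (A : ℤ × ℤ) : ℚ :=
  (A.2 - A.1) * ((2 * ℓ + 1) / 2 - A.2) / (A.2 - A.1 - (2 * ℓ + 1) / 2)

def yCoeff₁ (ℓ : ℕ) (A : ℤ × ℤ) : ℚ :=
  A.1 * (2 * ℓ + 1 - A.2 + A.1) / (A.2 - A.1 - (2 * ℓ + 1) / 2)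

lemma opY_ket_s17 {ℓ : ℕ} {A : ℤ × ℤ} (h : Adm ℓ A) :
    opY ℓ (ket ℓ A) =
      ((yCoeff₂ ℓ A : Fh) * hb) • ket ℓ (A.1, A.2 - 1) +
        ((yCoeff₁ ℓ A : Fh) * hb) • ket ℓ (A.1 - 1, A.2) := by
  rw [ket, dif_pos h, opY, Finsupp.lsum_single, LinearMap.toSpanSingleton_apply, one_smul]
  rfl

lemma yCoeff₂_antidiagonal (ℓ : ℕ) (N j : ℤ) :
    yCoeff₂ ℓ (N - j, N + j) = 2 * j * (2 * (N + j) - (2 * ℓ + 1)) / (2 * ℓ + 1 - 4 * j) := by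
  rw [yCoeff₂, ← mul_div_mul_left _ _ (by norm_num : (-2 : ℚ) ≠ 0)]
  push_cast
  congr 1 <;> ring

lemma yCoeff₁_antidiagonal (ℓ : ℕ) (N j : ℤ) :
    yCoeff₁ ℓ (N - j, N + j) = 2 * (N - j) * (2 * j - (2 * ℓ + 1)) / (2 * ℓ + 1 - 4 * j) := by
  rw [yCoeff₁, ← mul_div_mul_left _ _ (by norm_num : (-2 : ℚ) ≠ 0)]
  push_cast
  congr 1 <;> ring

lemma sum_range_succ_add_eq_zero {M : Type*} [AddCommMonoid M] (f g : ℕ → M)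
    (N : ℕ) (hf : f 0 = 0) (hg : g N = 0) (h : ∀ k < N, f (k + 1) + g k = 0) :
    ∑ j ∈ Finset.range (N + 1), (f j + g j) = 0 := by
  rw [Finset.sum_add_distrib, Finset.sum_range_succ' f, Finset.sum_range_succ g, hf, hg,
    add_zero, add_zero, ← Finset.sum_add_distrib]
  exact Finset.sum_eq_zero fun k hk => h k (Finset.mem_range.mp hk)

lemma opY_sum_antidiagonal {ℓ N : ℕ} (hN : N ≤ ℓ) (c : ℕ → ℚ)
    (hc : ∀ k < N, c (k + 1) * yCoeff₂ ℓ (N - (k + 1 : ℕ), N + (k + 1 : ℕ)) +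
      c k * yCoeff₁ ℓ (N - k, N + k) = 0) :
    opY ℓ (∑ j ∈ Finset.range (N + 1), (c j : Fh) • ket ℓ (N - j, N + j)) = 0 := by
  have adm : ∀ j ∈ Finset.range (N + 1), Adm ℓ ((N : ℤ) - j, (N : ℤ) + j) := by
    intro j hj
    have := Finset.mem_range.mp hj
    exact ⟨by omega, by omega, by omega⟩
  rw [map_sum, Finset.sum_congr rfl fun j hj => by rw [map_smul, opY_ket_s17 (adm j hj), smul_add]]
  refine sum_range_succ_add_eq_zero _ _ N ?_ ?_ fun k hk => ?_
  · rw [ket_eq_zero_of_not_adm (by rintro ⟨-, h, -⟩; simp at h), smul_zero, smul_zero]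
  · rw [ket_eq_zero_of_not_adm (by rintro ⟨h, -⟩; simp at h), smul_zero, smul_zero]
  · have hket : ((N : ℤ) - (k + 1 : ℕ), (N : ℤ) + (k + 1 : ℕ) - 1) =
        ((N : ℤ) - k - 1, (N : ℤ) + k) := by
      push_cast; ext <;> ring
    rw [hket, smul_smul, smul_smul, ← add_smul]
    refine smul_eq_zero_of_left ?_ _
    rw [← mul_assoc, ← mul_assoc, ← add_mul, ← Rat.cast_mul, ← Rat.cast_mul, ← Rat.cast_add,
      hc k hk, Rat.cast_zero, zero_mul]

def vFactor (ℓ N i : ℕ) : ℚ :=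
  ((2 * (ℓ : ℚ) + 1 - 2 * i) * (2 * (ℓ : ℚ) + 1 - 4 * ((i : ℚ) + 1))) /
    ((2 * (ℓ : ℚ) + 1 - 2 * ((N : ℚ) + (i : ℚ) + 1)) * (2 * (ℓ : ℚ) + 1 - 4 * i))

def vCoeff (ℓ N j : ℕ) : ℚ :=
  (-1) ^ j * N.choose j * ∏ i ∈ Finset.range j, vFactor ℓ N i

lemma succ_mul_vCoeff_succ {ℓ N j : ℕ} (hj : j ≤ N) :
    (j + 1) * vCoeff ℓ N (j + 1) = -(N - j) * vFactor ℓ N j * vCoeff ℓ N j := by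
  have hchoose : (N.choose (j + 1) : ℚ) * (j + 1) = N.choose j * (N - j) := by
    rw [← Nat.cast_sub hj]
    exact_mod_cast Nat.choose_succ_right_eq N j
  rw [vCoeff, vCoeff, Finset.prod_range_succ, pow_succ]
  linear_combination
    (-(-1 : ℚ) ^ j * (∏ i ∈ Finset.range j, vFactor ℓ N i) * vFactor ℓ N j) * hchoose

lemma two_mul_add_one_ne_two_mul (ℓ : ℕ) (z : ℤ) : (2 * ℓ + 1 : ℚ) ≠ 2 * z := by
  exact_mod_cast (by omega : (2 * ℓ + 1 : ℤ) ≠ 2 * z)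

lemma vCoeff_succ_mul_yCoeff₂_add_vCoeff_mul_yCoeff₁ {ℓ N k : ℕ} (hk : k < N) :
    vCoeff ℓ N (k + 1) * yCoeff₂ ℓ (N - (k + 1 : ℕ), N + (k + 1 : ℕ)) +
      vCoeff ℓ N k * yCoeff₁ ℓ (N - k, N + k) = 0 := by
  have odd_ne (z : ℤ) := two_mul_add_one_ne_two_mul ℓ z
  have d₁ : (2 * ℓ + 1 - 2 * (N + k + 1) : ℚ) ≠ 0 :=
    fun h => odd_ne (N + k + 1) (by push_cast; linarith)
  have d₂ : (2 * ℓ + 1 - 4 * (k + 1) : ℚ) ≠ 0 :=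
    fun h => odd_ne (2 * k + 2) (by push_cast; linarith)
  apply mul_left_cancel₀ (by positivity : (k + 1 : ℚ) ≠ 0)
  rw [mul_zero, mul_add, ← mul_assoc, succ_mul_vCoeff_succ hk.le, yCoeff₂_antidiagonal,
    yCoeff₁_antidiagonal, vFactor]
  push_cast
  field_simp
  -- the numerator left over the denominator `2ℓ + 1 - 4k` vanishes identically
  rw [mul_zero, div_eq_zero_iff]
  left
  ring

/-- for `0 ≤ N ≤ ℓ`, the vector
`v_N = ∑_{j=0}^N (-1)^j C(N,j) ∏_{i=0}^{j-1} ((2ℓ+1-2i)(2ℓ+1-4(i+1)))/((2ℓ+1-2(N+i+1))(2ℓ+1-4i)) |N-j, N+j⟩`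
is annihilated by `Y`. -/
theorem stmt17 (ℓ : ℕ) (N : ℕ) (hN : N ≤ ℓ) :
    opY ℓ (∑ j ∈ Finset.range (N + 1),
      (((-1 : ℚ) ^ j * (N.choose j : ℚ) *
          ∏ i ∈ Finset.range j,
            ((2 * (ℓ : ℚ) + 1 - 2 * i) * (2 * (ℓ : ℚ) + 1 - 4 * ((i : ℚ) + 1))) /
              ((2 * (ℓ : ℚ) + 1 - 2 * ((N : ℚ) + (i : ℚ) + 1)) *
                (2 * (ℓ : ℚ) + 1 - 4 * i)) : ℚ) : Fh) •
        ket ℓ ((N : ℤ) - (j : ℤ), (N : ℤ) + (j : ℤ))) = 0 :=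
  opY_sum_antidiagonal hN (vCoeff ℓ N) fun _ hk =>
    vCoeff_succ_mul_yCoeff₂_add_vCoeff_mul_yCoeff₁ hk
end
end
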